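/- Under the Bernoulli product model with $\sum_j p_j \leq W$, the variance of $\hat{M}_n - M_n$ satisfies $\mathrm{Var}(\hat{M}_n - M_n) \leq \frac{2n+1}{n(n+1)} W$, where $\hat{M}_n = K_{n,1}/n$. -/

import Mathlib

/-!
Write `M̂ₙ - Mₙ = ∑ⱼ Yⱼ` with `Yⱼ = 𝟙{Xⱼ = 1}/n - pⱼ 𝟙{Xⱼ = 0}`. The `Yⱼ` are independent and
`E[Yⱼ²] = pⱼ(1-pⱼ)ⁿ⁻¹/n + pⱼ²(1-pⱼ)ⁿ ≤ pⱼ/n + pⱼ/(n+1)`, the last step by `p(1-p)ⁿ ≤ 1/(n+1)`;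
hence every partial sum has variance at most `(1/n + 1/(n+1)) W`. Since `∑ⱼ P(Xⱼ = 1) ≤ n ∑ⱼ pⱼ`,
Borel–Cantelli shows that almost surely only finitely many `Xⱼ` equal `1`, so the partial sums
converge almost surely to `M̂ₙ - Mₙ`, and Fatou's lemma carries the variance bound to the limit.
-/

open MeasureTheory ProbabilityTheory Real Filter Topology

theorem mul_one_sub_pow_le_inv {p : ℝ} (hp₀ : 0 ≤ p) (hp₁ : p ≤ 1) (n : ℕ) :
    p * (1 - p) ^ n ≤ ((n : ℝ) + 1)⁻¹ := by
  have hgeom : p * ∑ i ∈ Finset.range (n + 1), (1 - p) ^ i = 1 - (1 - p) ^ (n + 1) := by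
    linear_combination -geom_sum_mul (1 - p) (n + 1)
  have hterms : ((n : ℝ) + 1) * (1 - p) ^ n ≤ ∑ i ∈ Finset.range (n + 1), (1 - p) ^ i := by
    simpa using Finset.card_nsmul_le_sum (Finset.range (n + 1)) (fun i => (1 - p) ^ i)
      ((1 - p) ^ n) fun i hi =>
        pow_le_pow_of_le_one (by linarith) (by linarith)
          (Nat.lt_succ_iff.mp (Finset.mem_range.mp hi))
  rw [← one_div, le_div_iff₀ (by positivity)]
  nlinarith [mul_le_mul_of_nonneg_left hterms hp₀, pow_nonneg (sub_nonneg.2 hp₁) (n + 1)]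

noncomputable def goodTuringErrorTerm (n : ℕ) (p : ℝ) (k : ℕ) : ℝ :=
  (if k = 1 then (1 : ℝ) else 0) / n - if k = 0 then p else 0

@[simp]
theorem goodTuringErrorTerm_zero (n : ℕ) (p : ℝ) : goodTuringErrorTerm n p 0 = -p := by
  simp [goodTuringErrorTerm]

@[simp]
theorem goodTuringErrorTerm_one (n : ℕ) (p : ℝ) : goodTuringErrorTerm n p 1 = 1 / n := by
  simp [goodTuringErrorTerm]

theorem support_goodTuringErrorTerm_subset (n : ℕ) (p : ℝ) :
    Function.support (goodTuringErrorTerm n p) ⊆ ({0, 1} : Finset ℕ) := by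
  intro k hk
  by_contra hk01
  simp only [Finset.coe_insert, Finset.coe_singleton, Set.mem_insert_iff,
    Set.mem_singleton_iff, not_or] at hk01
  simp [goodTuringErrorTerm, hk01.1, hk01.2] at hk

theorem abs_goodTuringErrorTerm_le (n : ℕ) (p : ℝ) (k : ℕ) :
    |goodTuringErrorTerm n p k| ≤ 1 / n + |p| := by
  unfold goodTuringErrorTerm
  split_ifs <;> simp_all
  positivity

theorem hasSum_goodTuringErrorTerm {p : ℕ → ℝ} {x : ℕ → ℕ} (hp : ∀ j, 0 ≤ p j)
    (hsum : Summable p) (hx : ∀ᶠ j in atTop, x j ≠ 1) (n : ℕ) :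
    HasSum (fun j => goodTuringErrorTerm n (p j) (x j))
      ((∑' j, if x j = 1 then (1 : ℝ) else 0) / n - ∑' j, if x j = 0 then p j else 0) := by
  have hones : Summable fun j => if x j = 1 then (1 : ℝ) else 0 := by
    refine summable_of_hasFiniteSupport ((Nat.cofinite_eq_atTop ▸ hx).subset fun j hj => ?_)
    simpa using hj
  have hzeros : Summable fun j => if x j = 0 then p j else 0 :=
    hsum.of_nonneg_of_le (fun j => by split_ifs <;> simp [hp j]) fun j => by
      split_ifs <;> simp [hp j]
  exact (hones.hasSum.div_const _).sub hzeros.hasSum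

section

variable {Ω : Type*} [MeasurableSpace Ω] {μ : Measure Ω}

theorem integral_comp_eq_sum_of_support_subset [IsFiniteMeasure μ] {α : Type*}
    [MeasurableSpace α] [MeasurableSingletonClass α] {ξ : Ω → α} (hξ : Measurable ξ)
    {f : α → ℝ} {s : Finset α} (hf : Function.support f ⊆ s) :
    ∫ ω, f (ξ ω) ∂μ = ∑ k ∈ s, f k * μ.real {ω | ξ ω = k} := by
  classical
  have hlevel : ∀ k, MeasurableSet {ω | ξ ω = k} := fun k => hξ (measurableSet_singleton k)
  have hdecomp :
      (fun ω => f (ξ ω)) = fun ω => ∑ k ∈ s, {ω | ξ ω = k}.indicator (fun _ => f k) ω := by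
    funext ω
    simp only [Set.indicator_apply, Set.mem_ofPred_eq, Finset.sum_ite_eq]
    split_ifs with h
    · rfl
    · exact Function.notMem_support.mp fun h' => h (hf h')
  rw [hdecomp, integral_finsetSum _ fun k _ => (integrable_const _).indicator (hlevel k)]
  simp_rw [integral_indicator_const _ (hlevel _), smul_eq_mul, mul_comm]

theorem variance_le_of_tendsto_ae [IsProbabilityMeasure μ] {f : ℕ → Ω → ℝ} {g : Ω → ℝ}
    {c V : ℝ} (hf : ∀ N, MemLp (f N) 2 μ)
    (hlim : ∀ᵐ ω ∂μ, Tendsto (fun N => f N ω) atTop (𝓝 (g ω)))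
    (hmean : Tendsto (fun N => μ[f N]) atTop (𝓝 c)) (hvar : ∀ N, variance (f N) μ ≤ V) :
    variance g μ ≤ V := by
  have hg : AEStronglyMeasurable g μ :=
    aestronglyMeasurable_of_tendsto_ae atTop (fun N => (hf N).1) hlim
  have hfatou : ∫⁻ ω, ENNReal.ofReal ((g ω - c) ^ 2) ∂μ ≤ ENNReal.ofReal V :=
    calc ∫⁻ ω, ENNReal.ofReal ((g ω - c) ^ 2) ∂μ
        = ∫⁻ ω, liminf (fun N => ENNReal.ofReal ((f N ω - μ[f N]) ^ 2)) atTop ∂μ := by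
          refine lintegral_congr_ae (hlim.mono fun ω hω => ?_)
          refine (Tendsto.liminf_eq ?_).symm
          exact ENNReal.tendsto_ofReal ((hω.sub hmean).pow 2)
      _ ≤ liminf (fun N => ∫⁻ ω, ENNReal.ofReal ((f N ω - μ[f N]) ^ 2) ∂μ) atTop :=
          lintegral_liminf_le' fun N =>
            ENNReal.measurable_ofReal.comp_aemeasurable
              (((hf N).1.aemeasurable.sub_const _).pow_const 2)
      _ = liminf (fun N => ENNReal.ofReal (variance (f N) μ)) atTop := by
          simp_rw [(hf _).ofReal_variance_eq, evariance_eq_lintegral_ofReal]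
      _ ≤ ENNReal.ofReal V :=
          liminf_le_of_le (by isBoundedDefault) fun b hb =>
            hb.exists.elim fun N hN => hN.trans (ENNReal.ofReal_le_ofReal (hvar N))
  have hV : 0 ≤ V := (variance_nonneg _ _).trans (hvar 0)
  calc variance g μ = variance (fun ω => g ω - c) μ := (variance_sub_const hg c).symm
    _ ≤ μ[(fun ω => g ω - c) ^ 2] :=
        variance_le_expectation_sq (hg.sub aestronglyMeasurable_const)
    _ = (∫⁻ ω, ENNReal.ofReal ((g ω - c) ^ 2) ∂μ).toReal :=
        integral_eq_lintegral_of_nonneg_ae (ae_of_all _ fun ω => sq_nonneg _)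
          ((hg.sub aestronglyMeasurable_const).pow 2)
    _ ≤ V := ENNReal.toReal_le_of_le_ofReal hV hfatou

theorem variance_le_tsum_of_hasSum_ae [IsProbabilityMeasure μ] {Y : ℕ → Ω → ℝ}
    {Z : Ω → ℝ} (hY : ∀ j, MemLp (Y j) 2 μ) (hindep : Pairwise fun i j => IndepFun (Y i) (Y j) μ)
    (hmean : Summable fun j => μ[Y j]) (hvar : Summable fun j => variance (Y j) μ)
    (hsum : ∀ᵐ ω ∂μ, HasSum (fun j => Y j ω) (Z ω)) :
    variance Z μ ≤ ∑' j, variance (Y j) μ := by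
  refine variance_le_of_tendsto_ae (f := fun N => ∑ j ∈ Finset.range N, Y j)
    (c := ∑' j, μ[Y j])    (fun N => memLp_finsetSum' _ fun j _ => hY j) ?_ ?_ fun N => ?_
  · filter_upwards [hsum] with ω hω
    simpa only [Finset.sum_apply] using hω.tendsto_sum_nat
  · simp only [Finset.sum_apply]
    simp_rw [integral_finsetSum _ fun j _ => (hY j).integrable one_le_two]
    exact hmean.hasSum.tendsto_sum_nat
  · rw [IndepFun.variance_sum (fun j _ => hY j) fun i _ j _ hij => hindep hij]
    exact hvar.sum_le_tsum _ fun j _ => variance_nonneg _ _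

variable {n : ℕ} {p : ℝ} {ξ : Ω → ℕ}

theorem memLp_goodTuringErrorTerm [IsFiniteMeasure μ] (hξm : Measurable ξ) (q : ENNReal) :
    MemLp (fun ω => goodTuringErrorTerm n p (ξ ω)) q μ :=
  MemLp.of_bound
    ((measurable_from_nat (f := goodTuringErrorTerm n p)).comp hξm).aestronglyMeasurable _
    (ae_of_all _ fun _ => (Real.norm_eq_abs _).trans_le (abs_goodTuringErrorTerm_le n p _))

theorem measureReal_eq_of_binomial (hp₀ : 0 ≤ p) (hp₁ : p ≤ 1)
    (hξ : ∀ k, μ {ω | ξ ω = k} = ENNReal.ofReal (n.choose k * p ^ k * (1 - p) ^ (n - k)))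
    (k : ℕ) : μ.real {ω | ξ ω = k} = n.choose k * p ^ k * (1 - p) ^ (n - k) := by
  rw [measureReal_def, hξ, ENNReal.toReal_ofReal]
  have := sub_nonneg.2 hp₁
  positivity

theorem integral_goodTuringErrorTerm [IsFiniteMeasure μ] (hn : 1 ≤ n) (hp₀ : 0 ≤ p)
    (hp₁ : p ≤ 1) (hξm : Measurable ξ)
    (hξ : ∀ k, μ {ω | ξ ω = k} = ENNReal.ofReal (n.choose k * p ^ k * (1 - p) ^ (n - k))) :
    ∫ ω, goodTuringErrorTerm n p (ξ ω) ∂μ = p * (1 - p) ^ (n - 1) - p * (1 - p) ^ n := by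
  have hn' : (n : ℝ) ≠ 0 := by positivity
  rw [integral_comp_eq_sum_of_support_subset hξm (support_goodTuringErrorTerm_subset n p),
    Finset.sum_pair zero_ne_one, measureReal_eq_of_binomial hp₀ hp₁ hξ,
    measureReal_eq_of_binomial hp₀ hp₁ hξ]
  simp only [goodTuringErrorTerm_zero, goodTuringErrorTerm_one, Nat.choose_zero_right,
    Nat.choose_one_right, Nat.cast_one, pow_zero, pow_one, Nat.sub_zero]
  field_simp
  ring

theorem abs_integral_goodTuringErrorTerm_le [IsFiniteMeasure μ] (hn : 1 ≤ n) (hp₀ : 0 ≤ p)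
    (hp₁ : p ≤ 1) (hξm : Measurable ξ)
    (hξ : ∀ k, μ {ω | ξ ω = k} = ENNReal.ofReal (n.choose k * p ^ k * (1 - p) ^ (n - k))) :
    |∫ ω, goodTuringErrorTerm n p (ξ ω) ∂μ| ≤ p := by
  have hq₀ : 0 ≤ 1 - p := sub_nonneg.2 hp₁
  have hbound (m : ℕ) : p * (1 - p) ^ m ≤ p :=
    mul_le_of_le_one_right hp₀ (pow_le_one₀ hq₀ (by linarith))
  rw [integral_goodTuringErrorTerm hn hp₀ hp₁ hξm hξ, abs_sub_le_iff]
  constructor <;> nlinarith [hbound (n - 1), hbound n, pow_nonneg hq₀ n, pow_nonneg hq₀ (n - 1)]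

theorem integral_goodTuringErrorTerm_sq [IsFiniteMeasure μ] (hn : 1 ≤ n) (hp₀ : 0 ≤ p)
    (hp₁ : p ≤ 1) (hξm : Measurable ξ)
    (hξ : ∀ k, μ {ω | ξ ω = k} = ENNReal.ofReal (n.choose k * p ^ k * (1 - p) ^ (n - k))) :
    ∫ ω, goodTuringErrorTerm n p (ξ ω) ^ 2 ∂μ =
      p * (1 - p) ^ (n - 1) / n + p ^ 2 * (1 - p) ^ n := by
  have hn' : (n : ℝ) ≠ 0 := by positivity
  have hsupp :
      Function.support (fun k => goodTuringErrorTerm n p k ^ 2) ⊆ ({0, 1} : Finset ℕ) :=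
    fun k hk => support_goodTuringErrorTerm_subset n p (by simpa using hk)
  rw [integral_comp_eq_sum_of_support_subset hξm hsupp,
    Finset.sum_pair zero_ne_one, measureReal_eq_of_binomial hp₀ hp₁ hξ,
    measureReal_eq_of_binomial hp₀ hp₁ hξ]
  simp only [goodTuringErrorTerm_zero, goodTuringErrorTerm_one, Nat.choose_zero_right,
    Nat.choose_one_right, Nat.cast_one, pow_zero, pow_one, Nat.sub_zero]
  field_simp
  ring

theorem variance_goodTuringErrorTerm_le [IsProbabilityMeasure μ] (hn : 1 ≤ n) (hp₀ : 0 ≤ p)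
    (hp₁ : p ≤ 1) (hξm : Measurable ξ)
    (hξ : ∀ k, μ {ω | ξ ω = k} = ENNReal.ofReal (n.choose k * p ^ k * (1 - p) ^ (n - k))) :
    variance (fun ω => goodTuringErrorTerm n p (ξ ω)) μ ≤ (1 / n + 1 / (n + 1)) * p := by
  have hq₀ : 0 ≤ 1 - p := sub_nonneg.2 hp₁
  have hsingle : p * (1 - p) ^ (n - 1) / n ≤ p / n := by
    gcongr
    exact mul_le_of_le_one_right hp₀ (pow_le_one₀ hq₀ (by linarith))
  have hnone : p ^ 2 * (1 - p) ^ n ≤ p / (n + 1) := by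
    calc p ^ 2 * (1 - p) ^ n = p * (p * (1 - p) ^ n) := by ring
      _ ≤ p * ((n : ℝ) + 1)⁻¹ := by gcongr; exact mul_one_sub_pow_le_inv hp₀ hp₁ n
      _ = p / (n + 1) := by ring
  calc variance (fun ω => goodTuringErrorTerm n p (ξ ω)) μ
      ≤ ∫ ω, goodTuringErrorTerm n p (ξ ω) ^ 2 ∂μ :=
        variance_le_expectation_sq (memLp_goodTuringErrorTerm hξm 2).aestronglyMeasurable
    _ = p * (1 - p) ^ (n - 1) / n + p ^ 2 * (1 - p) ^ n :=
        integral_goodTuringErrorTerm_sq hn hp₀ hp₁ hξm hξ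
    _ ≤ p / n + p / (n + 1) := add_le_add hsingle hnone
    _ = (1 / n + 1 / (n + 1)) * p := by ring

theorem ae_eventually_ne_one_of_binomial {p : ℕ → ℝ} {X : ℕ → Ω → ℕ}
    (hp₀ : ∀ j, 0 ≤ p j) (hp₁ : ∀ j, p j ≤ 1) (hsum : Summable p)
    (hbin : ∀ j k, μ {ω | X j ω = k} =
      ENNReal.ofReal ((n.choose k : ℝ) * p j ^ k * (1 - p j) ^ (n - k))) :
    ∀ᵐ ω ∂μ, ∀ᶠ j in atTop, X j ω ≠ 1 := by
  have hle (j : ℕ) : μ {ω | X j ω = 1} ≤ ENNReal.ofReal (n * p j) := by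
    rw [hbin j 1]
    refine ENNReal.ofReal_le_ofReal ?_
    simpa using mul_le_of_le_one_right (by have := hp₀ j; positivity)
      (pow_le_one₀ (sub_nonneg.2 (hp₁ j)) (sub_le_self 1 (hp₀ j)))
  refine ae_eventually_notMem
    (ne_top_of_le_ne_top (ENNReal.ofReal_ne_top (r := ∑' j, n * p j)) ?_)
  rw [ENNReal.ofReal_tsum_of_nonneg (fun j => by have := hp₀ j; positivity)
    (hsum.mul_left (n : ℝ))]
  exact ENNReal.tsum_le_tsum hle

end

theorem stmt
    {Ω : Type*} [MeasurableSpace Ω] (μ : Measure Ω) [IsProbabilityMeasure μ]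
    (p : ℕ → ℝ) (hp : ∀ j, p j ∈ Set.Ioo (0 : ℝ) 1) (hsum : Summable p)
    (n : ℕ) (X : ℕ → Ω → ℕ)
    (hmeas : ∀ j, Measurable (X j))
    (hindep : iIndepFun X μ)
    (hbin : ∀ j k, μ {ω | X j ω = k} =
      ENNReal.ofReal ((n.choose k : ℝ) * p j ^ k * (1 - p j) ^ (n - k)))
    (W : ℝ) (hW : ∑' j, p j ≤ W) (hn : 1 ≤ n) :
    variance (fun ω => (∑' j, if X j ω = 1 then (1 : ℝ) else 0) / n
        - ∑' j, if X j ω = 0 then p j else 0) μ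
      ≤ (2 * n + 1) / (n * (n + 1)) * W := by
  have hp₀ (j : ℕ) : 0 ≤ p j := (hp j).1.le
  have hp₁ (j : ℕ) : p j ≤ 1 := (hp j).2.le
  set Y : ℕ → Ω → ℝ := fun j ω => goodTuringErrorTerm n (p j) (X j ω)
  have hvar (j : ℕ) : variance (Y j) μ ≤ (1 / n + 1 / (n + 1)) * p j :=
    variance_goodTuringErrorTerm_le hn (hp₀ j) (hp₁ j) (hmeas j) (hbin j)
  have hvar_summable : Summable fun j => variance (Y j) μ :=
    (hsum.mul_left _).of_nonneg_of_le (fun j => variance_nonneg _ _) hvar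
  have hseries := variance_le_tsum_of_hasSum_ae (Y := Y)
    (fun j => memLp_goodTuringErrorTerm (hmeas j) 2)
    (fun i j hij => (hindep.indepFun hij).comp
      (measurable_from_nat (f := goodTuringErrorTerm n (p i)))
      (measurable_from_nat (f := goodTuringErrorTerm n (p j))))
    (Summable.of_norm_bounded hsum fun j =>
      abs_integral_goodTuringErrorTerm_le hn (hp₀ j) (hp₁ j) (hmeas j) (hbin j))
    hvar_summable
    ((ae_eventually_ne_one_of_binomial hp₀ hp₁ hsum hbin).mono fun ω hω =>
      hasSum_goodTuringErrorTerm hp₀ hsum hω n)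
  calc _ ≤ ∑' j, variance (Y j) μ := hseries
    _ ≤ ∑' j, (1 / n + 1 / (n + 1)) * p j := hvar_summable.tsum_le_tsum hvar (hsum.mul_left _)
    _ = (1 / n + 1 / (n + 1)) * ∑' j, p j := tsum_mul_left
    _ ≤ (1 / n + 1 / (n + 1)) * W := by gcongr
    _ = (2 * n + 1) / (n * (n + 1)) * W := by field_simp; ring
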